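/- (Proposition 1, gauge equivalence.) Let D[u] = Σ_{i=0}^{4} fᵢ(x)Dⁱu and D̄[ū] = Σ_{i=0}^{4} f̄ᵢ(x̄)D̄ⁱū be fourth order differential operators with smooth coefficients, and suppose they are gauge equivalent under the fiber-preserving transformation x̄ = ξ(x), ū = φ(x)u (ξ′ ≠ 0, φ ≠ 0): for every smooth u, writing ū(ξ(x)) = φ(x)u(x), one has D̄[ū](ξ(x)) = φ(x)·D[u](x) for all x. Let Φ be the prolongation of the transformation to J⁴, let ω¹,…,ω⁵ be the base coframe, ω⁶ = dI with I = (f₄s + f₃r + f₂q + f₁p)/u + f₀, and let ω̄¹,…,ω̄⁶ be the corresponding forms built from f̄ᵢ in the barred coordinates. Then on {u ≠ 0}: Φ*ω̄¹ = a₁ω¹, Φ*ω̄² = ω², Φ*ω̄³ = a₂ω² + a₃ω³, Φ*ω̄⁴ = a₄ω² + a₅ω³ + a₆ω⁴, Φ*ω̄⁵ = a₇ω² + a₈ω³ + a₉ω⁴ + a₁₀ω⁵, and Φ*ω̄⁶ = ω⁶, for smooth functions a₁,…,a₁₀ with a₁a₃a₆a₁₀ ≠ 0 everywhere (indeed a₁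 = ξ′, a₃ = φ/ξ′, a₆ = φ/ξ′², a₁₀ = φ/ξ′³). -/

import Mathlib

/-!
Every fibre coordinate of the prolongation `Φ` is linear in `u, p, q, r, s` with coefficients
depending on `x` only: `p̄ = (φ'u + φp)/ξ'`, and each further coordinate is `D_x` of the previous
one divided by `ξ'`. For such an `F`, `dF - (D_x F) dx` is a combination of the contact forms
`ω², …, ω⁵`, which gives the triangular shape of `Φ*ω̄³, Φ*ω̄⁴, Φ*ω̄⁵`, with diagonal `φ/ξ'ᵏ`.

`Φ` maps the 4-jet of `u` at `x` to the 4-jet of `ū` at `ξ(x)`, so the gauge equivalence says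
that the fibre-linear functions `Ī ∘ Φ` and `φ I`, with `I = f₄s + f₃r + f₂q + f₁p + f₀u`, agree on
jets of the form `(ξ - ξ(x₀))ᵐ / φ`. These jets form a triangular basis of the fibre over `x₀`,
so `Ī ∘ Φ = φ I` everywhere; dividing by `ū = φu` gives `Igau f̄ ∘ Φ = Igau f` on `u ≠ 0`, hence
`Φ*ω̄⁶ = ω⁶`.
-/

noncomputable section

/-- The fourth jet space `J⁴`, with coordinates `z = (x,u,p,q,r,s)` indexed `0,…,5`. -/
abbrev J : Type := Fin 6 → ℝ

/-- A differential 1-form on (an open subset of) `J ≅ ℝ⁶`. -/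
abbrev OneForm : Type := J → (J →L[ℝ] ℝ)

/-- The constant coordinate one-forms `dx, du, dp, dq, dr, ds` (`i = 0,…,5`). -/
def coord (i : Fin 6) : J →L[ℝ] ℝ := ContinuousLinearMap.proj i

/-- Exterior derivative of a 1-form, as a 2-form. -/
def extd (ω : OneForm) : J → J → J → ℝ :=
  fun z X Y => fderiv ℝ ω z X Y - fderiv ℝ ω z Y X

/-- Wedge product of two 1-forms, as a 2-form. -/
def wedge (α β : OneForm) : J → J → J → ℝ :=
  fun z X Y => α z X * β z Y - α z Y * β z X

/-- Pullback of a 1-form under a map `Φ : J → J`. -/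
def pullback (Φ : J → J) (ω : OneForm) : OneForm :=
  fun z => (ω (Φ z)).comp (fderiv ℝ Φ z)

/-- Truncated total derivative `D_x = ∂_x + p∂_u + q∂_p + r∂_q + s∂_r`. -/
def Dx (F : J → ℝ) : J → ℝ :=
  fun z => fderiv ℝ F z ![1, z 2, z 3, z 4, z 5, 0]

def pbar (ξ φ : ℝ → ℝ) : J → ℝ :=
  fun z => (deriv φ (z 0) * z 1 + φ (z 0) * z 2) / deriv ξ (z 0)

def qbar (ξ φ : ℝ → ℝ) : J → ℝ := fun z => Dx (pbar ξ φ) z / deriv ξ (z 0)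

def rbar (ξ φ : ℝ → ℝ) : J → ℝ := fun z => Dx (qbar ξ φ) z / deriv ξ (z 0)

def sbar (ξ φ : ℝ → ℝ) : J → ℝ := fun z => Dx (rbar ξ φ) z / deriv ξ (z 0)

/-- The prolongation to `J⁴` of the fiber-preserving transformation
`x̄ = ξ(x), ū = φ(x)u`. -/
def Prolong (ξ φ : ℝ → ℝ) : J → J :=
  fun z => ![ξ (z 0), φ (z 0) * z 1, pbar ξ φ z, qbar ξ φ z, rbar ξ φ z, sbar ξ φ z]

/-- `ω¹ = dx`. -/
def ω1 : OneForm := fun _ => coord 0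
/-- `ω² = (du − p dx)/u`. -/
def ω2 : OneForm := fun z => (z 1)⁻¹ • (coord 1 - z 2 • coord 0)
/-- `ω³ = dp − q dx`. -/
def ω3 : OneForm := fun z => coord 2 - z 3 • coord 0
/-- `ω⁴ = dq − r dx`. -/
def ω4 : OneForm := fun z => coord 3 - z 4 • coord 0
/-- `ω⁵ = dr − s dx`. -/
def ω5 : OneForm := fun z => coord 4 - z 5 • coord 0

/-- `I = f₄s + f₃r + f₂q + f₁p + f₀u` (direct equivalence invariant). -/
def Idir (f : Fin 5 → ℝ → ℝ) : J → ℝ :=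
  fun z => f 4 (z 0) * z 5 + f 3 (z 0) * z 4 + f 2 (z 0) * z 3 + f 1 (z 0) * z 2 + f 0 (z 0) * z 1

/-- `I = (f₄s + f₃r + f₂q + f₁p)/u + f₀` (gauge equivalence invariant). -/
def Igau (f : Fin 5 → ℝ → ℝ) : J → ℝ :=
  fun z => (f 4 (z 0) * z 5 + f 3 (z 0) * z 4 + f 2 (z 0) * z 3 + f 1 (z 0) * z 2) / z 1 + f 0 (z 0)

open scoped ContDiff

def fibreLinear (c : Fin 5 → ℝ → ℝ) (z : J) : ℝ := ∑ i : Fin 5, c i (z 0) * z i.succ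

def totalDerivCoeffs (c : Fin 5 → ℝ → ℝ) : Fin 5 → ℝ → ℝ :=
  Matrix.vecCons (deriv (c 0)) fun j : Fin 4 => deriv (c j.succ) + c j.castSucc

def fibreLinearFDeriv (c : Fin 5 → ℝ → ℝ) (z : J) : J →L[ℝ] ℝ :=
  fibreLinear (fun i => deriv (c i)) z • coord 0 + ∑ i : Fin 5, c i (z 0) • coord i.succ

lemma coord_apply (i : Fin 6) (X : J) : coord i X = X i := rfl

lemma Idir_eq_fibreLinear (f : Fin 5 → ℝ → ℝ) : Idir f = fibreLinear f := by
  ext z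
  simp only [Idir, fibreLinear, Fin.sum_univ_five, Fin.reduceSucc, Fin.succ_zero_eq_one,
    Fin.succ_one_eq_two]
  ring

lemma hasFDerivAt_comp_coord_zero {g : ℝ → ℝ} (hg : Differentiable ℝ g) (z : J) :
    HasFDerivAt (fun w : J => g (w 0)) (deriv g (z 0) • coord 0) z :=
  (hg (z 0)).hasDerivAt.comp_hasFDerivAt z (coord 0).hasFDerivAt

lemma hasFDerivAt_fibreLinear {c : Fin 5 → ℝ → ℝ} (hc : ∀ i, Differentiable ℝ (c i)) (z : J) :
    HasFDerivAt (fibreLinear c) (fibreLinearFDeriv c z) z := by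
  have h := HasFDerivAt.fun_sum (u := Finset.univ) fun i _ =>
    (hasFDerivAt_comp_coord_zero (hc i) z).mul' (coord i.succ).hasFDerivAt
  refine h.congr_fderiv (ContinuousLinearMap.ext fun X => ?_)
  simp only [fibreLinearFDeriv, fibreLinear, Fin.sum_univ_five, add_apply, smul_apply, coord_apply,
    op_smul_eq_smul, smul_eq_mul]
  ring

lemma Dx_fibreLinear {c : Fin 5 → ℝ → ℝ} (hc : ∀ i, Differentiable ℝ (c i)) (z : J) :
    Dx (fibreLinear c) z = fibreLinear (totalDerivCoeffs c) z := by
  simp only [Dx, (hasFDerivAt_fibreLinear hc z).fderiv, fibreLinearFDeriv, fibreLinear,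
    totalDerivCoeffs, Fin.sum_univ_five, Fin.succ_zero_eq_one, Fin.succ_one_eq_two, Fin.reduceSucc,
    Fin.castSucc_zero, Fin.castSucc_one, Fin.reduceCastSucc, Matrix.cons_val, add_apply, smul_apply,
    coord_apply, smul_eq_mul, Pi.add_apply]
  ring

lemma fibreLinearFDeriv_sub_smul_coord_zero (c : Fin 5 → ℝ → ℝ) {z : J} (hz : z 1 ≠ 0) :
    fibreLinearFDeriv c z - fibreLinear (totalDerivCoeffs c) z • coord 0
      = (z 1 * c 0 (z 0)) • ω2 z + c 1 (z 0) • ω3 z + c 2 (z 0) • ω4 z + c 3 (z 0) • ω5 z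
        + c 4 (z 0) • coord 5 := by
  ext X
  simp only [fibreLinearFDeriv, fibreLinear, totalDerivCoeffs, ω2, ω3, ω4, ω5,
    Fin.sum_univ_five, Fin.succ_zero_eq_one, Fin.succ_one_eq_two, Fin.reduceSucc, Fin.castSucc_zero,
    Fin.castSucc_one, Fin.reduceCastSucc,
    Matrix.cons_val, sub_apply, add_apply, smul_apply, coord_apply, smul_eq_mul, Pi.add_apply]
  field_simp
  ring

lemma contDiff_totalDerivCoeffs {c : Fin 5 → ℝ → ℝ} (hc : ∀ i, ContDiff ℝ ∞ (c i)) (i : Fin 5) :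
    ContDiff ℝ ∞ (totalDerivCoeffs c i) := by
  have hc' : ∀ i, ContDiff ℝ ∞ (deriv (c i)) := fun i => (contDiff_infty_iff_deriv.mp (hc i)).2
  refine Fin.cases (hc' 0) (fun j => ?_) i
  exact (hc' j.succ).add (hc j.castSucc)

lemma totalDerivCoeffs_succ (c : Fin 5 → ℝ → ℝ) (j : Fin 4) :
    totalDerivCoeffs c j.succ = deriv (c j.succ) + c j.castSucc := rfl

lemma fibreLinear_div (c : Fin 5 → ℝ → ℝ) (g : ℝ → ℝ) (z : J) :
    fibreLinear (fun i => c i / g) z = fibreLinear c z / g (z 0) := by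
  simp only [fibreLinear, Pi.div_apply, Finset.sum_div]
  exact Finset.sum_congr rfl fun i _ => div_mul_eq_mul_div _ _ _

/-- `pbar`, `qbar`, `rbar`, `sbar` are `fibreLinear (prolongCoeffs ξ φ n)` for `n = 0, 1, 2, 3`. -/
def prolongCoeffs (ξ φ : ℝ → ℝ) : ℕ → Fin 5 → ℝ → ℝ
  | 0 => ![deriv φ / deriv ξ, φ / deriv ξ, 0, 0, 0]
  | n + 1 => fun i => totalDerivCoeffs (prolongCoeffs ξ φ n) i / deriv ξ

section prolongCoeffs

variable {ξ φ : ℝ → ℝ}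

lemma contDiff_prolongCoeffs (hξ : ContDiff ℝ ∞ ξ) (hφ : ContDiff ℝ ∞ φ)
    (hξ' : ∀ x, deriv ξ x ≠ 0) (n : ℕ) (i : Fin 5) : ContDiff ℝ ∞ (prolongCoeffs ξ φ n i) := by
  have hdξ : ContDiff ℝ ∞ (deriv ξ) := (contDiff_infty_iff_deriv.mp hξ).2
  induction n generalizing i with
  | zero =>
    fin_cases i
    · exact ((contDiff_infty_iff_deriv.mp hφ).2).div hdξ hξ'
    · exact hφ.div hdξ hξ'
    all_goals exact contDiff_const
  | succ n ih => exact (contDiff_totalDerivCoeffs ih i).div hdξ hξ'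

lemma prolongCoeffs_eq_zero_of_lt (n : ℕ) (i : Fin 5) (hi : n + 1 < i) :
    prolongCoeffs ξ φ n i = 0 := by
  induction n generalizing i with
  | zero => fin_cases i <;> first | rfl | simp at hi
  | succ n ih =>
    obtain ⟨j, rfl⟩ := Fin.exists_succ_eq.mpr (Fin.pos_iff_ne_zero.mp (by omega) : i ≠ 0)
    have hj : n + 1 < j.castSucc := by simp only [Fin.val_succ, Fin.val_castSucc] at hi ⊢; omega
    ext x
    simp [prolongCoeffs, totalDerivCoeffs, ih _ hj, ih j.succ (by omega)]

lemma prolongCoeffs_diag (n : ℕ) (i : Fin 5) (hi : (i : ℕ) = n + 1) :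
    prolongCoeffs ξ φ n i = φ / deriv ξ ^ (n + 1) := by
  induction n generalizing i with
  | zero => obtain rfl : i = 1 := Fin.ext hi; simp [prolongCoeffs]
  | succ n ih =>
    obtain ⟨j, rfl⟩ : ∃ j : Fin 4, i = j.succ := ⟨⟨n + 1, by omega⟩, Fin.ext (by simp [hi])⟩
    simp only [Fin.val_succ, add_left_inj] at hi
    simp only [prolongCoeffs]
    rw [totalDerivCoeffs_succ, prolongCoeffs_eq_zero_of_lt n _ (by simp [hi]),
      ih _ (by simp [hi])]
    ext x
    simp [pow_succ, div_div]

end prolongCoeffs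

lemma differentiable_fibreLinear {c : Fin 5 → ℝ → ℝ} (hc : ∀ i, Differentiable ℝ (c i)) :
    Differentiable ℝ (fibreLinear c) :=
  fun z => (hasFDerivAt_fibreLinear hc z).differentiableAt

lemma pullback_apply (Φ : J → J) (θ : OneForm) (z : J) :
    pullback Φ θ z = (θ (Φ z)).comp (fderiv ℝ Φ z) := rfl

lemma pbar_eq_fibreLinear {ξ φ : ℝ → ℝ} : pbar ξ φ = fibreLinear (prolongCoeffs ξ φ 0) := by
  ext z
  simp only [pbar, fibreLinear, prolongCoeffs, Fin.sum_univ_five, Fin.succ_zero_eq_one,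
    Fin.succ_one_eq_two, Fin.reduceSucc,
    Matrix.cons_val, Pi.div_apply, Pi.zero_apply, zero_mul, add_zero]
  ring

section Prolong

variable {ξ φ : ℝ → ℝ} (hξ : ContDiff ℝ ∞ ξ) (hφ : ContDiff ℝ ∞ φ) (hξ' : ∀ x, deriv ξ x ≠ 0)
include hξ hφ hξ'

lemma differentiable_prolongCoeffs (n : ℕ) (i : Fin 5) :
    Differentiable ℝ (prolongCoeffs ξ φ n i) :=
  (contDiff_prolongCoeffs hξ hφ hξ' n i).differentiable (by simp)

lemma fibreLinear_prolongCoeffs_succ (n : ℕ) (z : J) :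
    fibreLinear (prolongCoeffs ξ φ (n + 1)) z
      = Dx (fibreLinear (prolongCoeffs ξ φ n)) z / deriv ξ (z 0) := by
  rw [Dx_fibreLinear (differentiable_prolongCoeffs hξ hφ hξ' n), ← fibreLinear_div]
  rfl

lemma qbar_eq_fibreLinear : qbar ξ φ = fibreLinear (prolongCoeffs ξ φ 1) := by
  ext z
  rw [fibreLinear_prolongCoeffs_succ hξ hφ hξ', ← pbar_eq_fibreLinear, qbar]

lemma rbar_eq_fibreLinear : rbar ξ φ = fibreLinear (prolongCoeffs ξ φ 2) := by
  ext z
  rw [fibreLinear_prolongCoeffs_succ hξ hφ hξ', ← qbar_eq_fibreLinear hξ hφ hξ', rbar]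

lemma sbar_eq_fibreLinear : sbar ξ φ = fibreLinear (prolongCoeffs ξ φ 3) := by
  ext z
  rw [fibreLinear_prolongCoeffs_succ hξ hφ hξ', ← rbar_eq_fibreLinear hξ hφ hξ', sbar]

lemma differentiable_Prolong : Differentiable ℝ (Prolong ξ φ) := by
  have hc := fun n => differentiable_fibreLinear (differentiable_prolongCoeffs hξ hφ hξ' n)
  rw [differentiable_pi]
  intro i
  fin_cases i
  · exact (hξ.differentiable (by simp)).comp (differentiable_apply 0)
  · exact ((hφ.differentiable (by simp)).comp (differentiable_apply 0)).mul (differentiable_apply 1)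
  · simpa [Prolong, pbar_eq_fibreLinear] using hc _
  · simpa [Prolong, qbar_eq_fibreLinear hξ hφ hξ'] using hc _
  · simpa [Prolong, rbar_eq_fibreLinear hξ hφ hξ'] using hc _
  · simpa [Prolong, sbar_eq_fibreLinear hξ hφ hξ'] using hc _

lemma coord_comp_fderiv_Prolong {i : Fin 6} {F : J → ℝ} {F' : J →L[ℝ] ℝ} {z : J}
    (hF : ∀ w, Prolong ξ φ w i = F w) (hF' : HasFDerivAt F F' z) :
    (coord i).comp (fderiv ℝ (Prolong ξ φ) z) = F' :=
  ((coord i).hasFDerivAt.comp z (differentiable_Prolong hξ hφ hξ' z).hasFDerivAt).unique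
    (hF'.congr_of_eventuallyEq (Filter.Eventually.of_forall hF))

lemma coord_zero_comp_fderiv_Prolong (z : J) :
    (coord 0).comp (fderiv ℝ (Prolong ξ φ) z) = deriv ξ (z 0) • coord 0 :=
  coord_comp_fderiv_Prolong hξ hφ hξ' (fun _ => rfl)
    (hasFDerivAt_comp_coord_zero (hξ.differentiable (by simp)) z)

lemma pullback_Prolong_ω1 (z : J) : pullback (Prolong ξ φ) ω1 z = deriv ξ (z 0) • ω1 z :=
  coord_zero_comp_fderiv_Prolong hξ hφ hξ' z

lemma pullback_Prolong_ω2 (hφ0 : ∀ x, φ x ≠ 0) {z : J} (hz : z 1 ≠ 0) :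
    pullback (Prolong ξ φ) ω2 z = ω2 z := by
  have h1 := coord_comp_fderiv_Prolong hξ hφ hξ' (i := 1) (fun _ => rfl)
    ((hasFDerivAt_comp_coord_zero (hφ.differentiable (by simp)) z).mul' (coord 1).hasFDerivAt)
  rw [pullback_apply, ω2, ContinuousLinearMap.smul_comp, ContinuousLinearMap.sub_comp,
    ContinuousLinearMap.smul_comp, h1, coord_zero_comp_fderiv_Prolong hξ hφ hξ']
  ext X
  have := hφ0 (z 0)
  have := hξ' (z 0)
  simp only [Prolong, pbar, ω2, Matrix.cons_val, sub_apply, add_apply, smul_apply, coord_apply,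
    op_smul_eq_smul, smul_eq_mul]
  field_simp
  ring

lemma pullback_Prolong_contactForm {θ : OneForm} {i j : Fin 6} {n : ℕ}
    (hθ : ∀ w, θ w = coord i - w j • coord 0)
    (hi : ∀ w, Prolong ξ φ w i = fibreLinear (prolongCoeffs ξ φ n) w)
    (hj : ∀ w, Prolong ξ φ w j = fibreLinear (prolongCoeffs ξ φ (n + 1)) w) (z : J) :
    pullback (Prolong ξ φ) θ z
      = fibreLinearFDeriv (prolongCoeffs ξ φ n) z
        - fibreLinear (totalDerivCoeffs (prolongCoeffs ξ φ n)) z • coord 0 := by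
  have hc := differentiable_prolongCoeffs hξ hφ hξ' n
  rw [pullback_apply, hθ, ContinuousLinearMap.sub_comp, ContinuousLinearMap.smul_comp,
    coord_comp_fderiv_Prolong hξ hφ hξ' hi (hasFDerivAt_fibreLinear hc z),
    coord_zero_comp_fderiv_Prolong hξ hφ hξ', hj, fibreLinear_prolongCoeffs_succ hξ hφ hξ',
    Dx_fibreLinear hc, smul_smul, div_mul_cancel₀ _ (hξ' (z 0))]

lemma pullback_Prolong_ω3 {z : J} (hz : z 1 ≠ 0) :
    pullback (Prolong ξ φ) ω3 z
      = (z 1 * prolongCoeffs ξ φ 0 0 (z 0)) • ω2 z + prolongCoeffs ξ φ 0 1 (z 0) • ω3 z := by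
  rw [pullback_Prolong_contactForm hξ hφ hξ' (θ := ω3) (i := 2) (j := 3) (n := 0)
      (fun _ => rfl) (congrFun pbar_eq_fibreLinear)
      (congrFun (qbar_eq_fibreLinear hξ hφ hξ')), fibreLinearFDeriv_sub_smul_coord_zero _ hz,
    prolongCoeffs_eq_zero_of_lt 0 2 (by decide), prolongCoeffs_eq_zero_of_lt 0 3 (by decide),
    prolongCoeffs_eq_zero_of_lt 0 4 (by decide)]
  simp

lemma pullback_Prolong_ω4 {z : J} (hz : z 1 ≠ 0) :
    pullback (Prolong ξ φ) ω4 z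
      = (z 1 * prolongCoeffs ξ φ 1 0 (z 0)) • ω2 z + prolongCoeffs ξ φ 1 1 (z 0) • ω3 z
        + prolongCoeffs ξ φ 1 2 (z 0) • ω4 z := by
  rw [pullback_Prolong_contactForm hξ hφ hξ' (θ := ω4) (i := 3) (j := 4) (n := 1)
      (fun _ => rfl) (congrFun (qbar_eq_fibreLinear hξ hφ hξ'))
      (congrFun (rbar_eq_fibreLinear hξ hφ hξ')), fibreLinearFDeriv_sub_smul_coord_zero _ hz,
    prolongCoeffs_eq_zero_of_lt 1 3 (by decide), prolongCoeffs_eq_zero_of_lt 1 4 (by decide)]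
  simp

lemma pullback_Prolong_ω5 {z : J} (hz : z 1 ≠ 0) :
    pullback (Prolong ξ φ) ω5 z
      = (z 1 * prolongCoeffs ξ φ 2 0 (z 0)) • ω2 z + prolongCoeffs ξ φ 2 1 (z 0) • ω3 z
        + prolongCoeffs ξ φ 2 2 (z 0) • ω4 z + prolongCoeffs ξ φ 2 3 (z 0) • ω5 z := by
  rw [pullback_Prolong_contactForm hξ hφ hξ' (θ := ω5) (i := 4) (j := 5) (n := 2)
      (fun _ => rfl) (congrFun (rbar_eq_fibreLinear hξ hφ hξ'))
      (congrFun (sbar_eq_fibreLinear hξ hφ hξ')), fibreLinearFDeriv_sub_smul_coord_zero _ hz,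
    prolongCoeffs_eq_zero_of_lt 2 4 (by decide)]
  simp

end Prolong

def jet (u : ℝ → ℝ) (x : ℝ) : J := Matrix.vecCons x fun i : Fin 5 => iteratedDeriv i u x

lemma fibreLinear_jet (c : Fin 5 → ℝ → ℝ) (u : ℝ → ℝ) (x : ℝ) :
    fibreLinear c (jet u x) = ∑ i : Fin 5, c i x * iteratedDeriv i u x := by
  simp [fibreLinear, jet]

lemma hasDerivAt_iteratedDeriv {u : ℝ → ℝ} (hu : ContDiff ℝ ∞ u) (k : ℕ) (x : ℝ) :
    HasDerivAt (iteratedDeriv k u) (iteratedDeriv (k + 1) u x) x := by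
  rw [iteratedDeriv_succ]
  exact (hu.differentiable_iteratedDeriv k (mod_cast ENat.natCast_lt_top k) x).hasDerivAt

/-- `jet u` stops at `u⁗`, so the coefficient of the top coordinate has to vanish. -/
lemma hasDerivAt_fibreLinear_jet {c : Fin 5 → ℝ → ℝ} (hc : ∀ i, Differentiable ℝ (c i))
    (hc4 : c 4 = 0) {u : ℝ → ℝ} (hu : ContDiff ℝ ∞ u) (x : ℝ) :
    HasDerivAt (fun y => fibreLinear c (jet u y))
      (fibreLinear (totalDerivCoeffs c) (jet u x)) x := by
  rw [funext fun y => fibreLinear_jet c u y]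
  refine (HasDerivAt.fun_sum (u := Finset.univ) fun i _ =>
    (hc i x).hasDerivAt.fun_mul (hasDerivAt_iteratedDeriv hu i x)).congr_deriv ?_
  simp only [fibreLinear_jet, totalDerivCoeffs, hc4, Fin.sum_univ_five, Fin.succ_zero_eq_one,
    Fin.succ_one_eq_two, Fin.reduceSucc, Fin.castSucc_zero, Fin.castSucc_one, Fin.reduceCastSucc,
    Matrix.cons_val, Pi.add_apply, Pi.zero_apply, deriv_zero, zero_mul, add_zero,
    Fin.coe_ofNat_eq_mod, Nat.reduceMod, Nat.reduceAdd, iteratedDeriv_zero, iteratedDeriv_one]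
  ring

section GaugeJets

variable {ξ φ u v : ℝ → ℝ} (hξ : ContDiff ℝ ∞ ξ) (hφ : ContDiff ℝ ∞ φ) (hξ' : ∀ x, deriv ξ x ≠ 0)
  (hu : ContDiff ℝ ∞ u) (hv : ContDiff ℝ ∞ v) (hvu : ∀ x, v (ξ x) = φ x * u x)
include hξ hφ hξ' hu hv hvu

lemma fibreLinear_prolongCoeffs_jet (n : ℕ) (hn : n ≤ 3) (x : ℝ) :
    fibreLinear (prolongCoeffs ξ φ n) (jet u x) = iteratedDeriv (n + 1) v (ξ x) := by
  induction n generalizing x with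
  | zero =>
    have hξx := (hξ.differentiable (by simp) x).hasDerivAt
    have hl := (hasDerivAt_iteratedDeriv hv 0 (ξ x)).comp x hξx
    have hr := (hφ.differentiable (by simp) x).hasDerivAt.mul
      (hu.differentiable (by simp) x).hasDerivAt
    rw [iteratedDeriv_zero, show v ∘ ξ = φ * u from funext hvu] at hl
    have key := hl.unique hr
    rw [← pbar_eq_fibreLinear]
    simp only [pbar, jet, Matrix.cons_val, Fin.val_zero, Fin.val_one, zero_add, iteratedDeriv_zero,
      iteratedDeriv_one] at key ⊢
    rw [← key, mul_div_cancel_right₀ _ (hξ' x)]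
  | succ n ih =>
    have hξx := (hξ.differentiable (by simp) x).hasDerivAt
    have hTaylor := hasDerivAt_fibreLinear_jet (differentiable_prolongCoeffs hξ hφ hξ' n)
      (prolongCoeffs_eq_zero_of_lt n 4 (show n + 1 < 4 by omega)) hu x
    rw [funext (ih (by omega))] at hTaylor
    rw [fibreLinear_prolongCoeffs_succ hξ hφ hξ',
      Dx_fibreLinear (differentiable_prolongCoeffs hξ hφ hξ' n),
      hTaylor.unique ((hasDerivAt_iteratedDeriv hv _ (ξ x)).comp x hξx)]
    simp [jet, hξ' x]

lemma Prolong_jet (x : ℝ) : Prolong ξ φ (jet u x) = jet v (ξ x) := by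
  have hjet := fibreLinear_prolongCoeffs_jet hξ hφ hξ' hu hv hvu
  ext i
  fin_cases i
  · rfl
  · simp [Prolong, jet, hvu]
  · exact (congrFun pbar_eq_fibreLinear _).trans (hjet 0 (by omega) x)
  · exact (congrFun (qbar_eq_fibreLinear hξ hφ hξ') _).trans (hjet 1 (by omega) x)
  · exact (congrFun (rbar_eq_fibreLinear hξ hφ hξ') _).trans (hjet 2 (by omega) x)
  · exact (congrFun (sbar_eq_fibreLinear hξ hφ hξ') _).trans (hjet 3 (by omega) x)

end GaugeJets

section TestFunctions

variable {g : ℝ → ℝ} {x₀ : ℝ} (hg : ContDiff ℝ ∞ g) (hg₀ : g x₀ = 0)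
include hg

omit hg₀ in
lemma deriv_pow_succ_mul {H : ℝ → ℝ} (hH : ContDiff ℝ ∞ H) (m : ℕ) :
    deriv (fun x => g x ^ (m + 1) * H x)
      = fun x => g x ^ m * ((m + 1) * deriv g x * H x + g x * deriv H x) := by
  ext x
  rw [(((hg.differentiable (by simp) x).hasDerivAt.fun_pow (m + 1)).fun_mul
    (hH.differentiable (by simp) x).hasDerivAt).deriv]
  push_cast
  ring

omit hg₀ in
lemma contDiff_deriv_pow_succ_mul_cofactor {H : ℝ → ℝ} (hH : ContDiff ℝ ∞ H) (m : ℕ) :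
    ContDiff ℝ ∞ fun x => (m + 1) * deriv g x * H x + g x * deriv H x :=
  ((contDiff_const.mul (contDiff_infty_iff_deriv.mp hg).2).mul hH).add
    (hg.mul (contDiff_infty_iff_deriv.mp hH).2)

include hg₀

lemma iteratedDeriv_pow_mul_of_lt {i m : ℕ} (him : i < m) {H : ℝ → ℝ} (hH : ContDiff ℝ ∞ H) :
    iteratedDeriv i (fun x => g x ^ m * H x) x₀ = 0 := by
  induction i generalizing m H with
  | zero =>
    simp [hg₀, zero_pow (by omega : m ≠ 0)]
  | succ i ih =>
    obtain ⟨m, rfl⟩ : ∃ m', m = m' + 1 := ⟨m - 1, by omega⟩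
    rw [iteratedDeriv_succ', deriv_pow_succ_mul hg hH]
    exact ih (by omega) (contDiff_deriv_pow_succ_mul_cofactor hg hH m)

lemma iteratedDeriv_pow_mul_self (m : ℕ) {H : ℝ → ℝ} (hH : ContDiff ℝ ∞ H) :
    iteratedDeriv m (fun x => g x ^ m * H x) x₀ = m.factorial * deriv g x₀ ^ m * H x₀ := by
  induction m generalizing H with
  | zero => simp
  | succ m ih =>
    rw [iteratedDeriv_succ', deriv_pow_succ_mul hg hH,
      ih (contDiff_deriv_pow_succ_mul_cofactor hg hH m), hg₀, Nat.factorial_succ]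
    push_cast
    ring

lemma eq_of_forall_sum_mul_iteratedDeriv_pow_mul_eq {n : ℕ} {A B : Fin n → ℝ} {H : ℝ → ℝ}
    (hH : ContDiff ℝ ∞ H) (hg' : deriv g x₀ ≠ 0) (hH₀ : H x₀ ≠ 0)
    (h : ∀ m : Fin n, ∑ i, A i * iteratedDeriv i (fun x => g x ^ (m : ℕ) * H x) x₀
      = ∑ i, B i * iteratedDeriv i (fun x => g x ^ (m : ℕ) * H x) x₀) : A = B := by
  let M : Matrix (Fin n) (Fin n) ℝ :=
    Matrix.of fun i m => iteratedDeriv i (fun x => g x ^ (m : ℕ) * H x) x₀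
  have hM : M.det ≠ 0 := by
    rw [Matrix.det_of_isLowerTriangular M fun i m him =>
      iteratedDeriv_pow_mul_of_lt hg hg₀ (Fin.lt_def.mp him) hH]
    refine Finset.prod_ne_zero_iff.mpr fun i _ => ?_
    simp only [M, Matrix.of_apply, iteratedDeriv_pow_mul_self hg hg₀ _ hH]
    exact mul_ne_zero (mul_ne_zero (by positivity) (pow_ne_zero _ hg')) hH₀
  refine sub_eq_zero.mp (Matrix.eq_zero_of_vecMul_eq_zero hM (funext fun m => ?_))
  simp [M, Matrix.vecMul, dotProduct, sub_mul, h m]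

end TestFunctions

lemma Igau_eq_Idir_div (g : Fin 5 → ℝ → ℝ) {w : J} (hw : w 1 ≠ 0) : Igau g w = Idir g w / w 1 := by
  simp only [Igau, Idir]
  field_simp

lemma differentiableAt_Igau {g : Fin 5 → ℝ → ℝ} (hg : ∀ i, Differentiable ℝ (g i)) {w : J}
    (hw : w 1 ≠ 0) : DifferentiableAt ℝ (Igau g) w := by
  unfold Igau
  fun_prop (disch := assumption)

section Gauge

variable {ξ φ : ℝ → ℝ} (hξ : ContDiff ℝ ∞ ξ) (hφ : ContDiff ℝ ∞ φ) (hξ' : ∀ x, deriv ξ x ≠ 0)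
include hξ hφ hξ'

lemma exists_fibreLinear_comp_Prolong (g : Fin 5 → ℝ → ℝ) :
    ∃ c : Fin 5 → ℝ → ℝ, ∀ z, fibreLinear g (Prolong ξ φ z) = fibreLinear c z := by
  refine ⟨fun i x => g 0 (ξ x) * ![φ, 0, 0, 0, 0] i x + g 1 (ξ x) * prolongCoeffs ξ φ 0 i x
    + g 2 (ξ x) * prolongCoeffs ξ φ 1 i x + g 3 (ξ x) * prolongCoeffs ξ φ 2 i x
    + g 4 (ξ x) * prolongCoeffs ξ φ 3 i x, fun z => ?_⟩
  simp only [fibreLinear, Prolong, pbar_eq_fibreLinear, qbar_eq_fibreLinear hξ hφ hξ',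
    rbar_eq_fibreLinear hξ hφ hξ', sbar_eq_fibreLinear hξ hφ hξ', Fin.sum_univ_five,
    Fin.succ_zero_eq_one, Fin.succ_one_eq_two, Fin.reduceSucc,
    Matrix.cons_val, Pi.zero_apply, mul_zero]
  ring

variable (hφ0 : ∀ x, φ x ≠ 0) {f fb : Fin 5 → ℝ → ℝ}
  (heq : ∀ u v : ℝ → ℝ, ContDiff ℝ ∞ u → ContDiff ℝ ∞ v → (∀ x, v (ξ x) = φ x * u x) →
    ∀ x, ∑ i : Fin 5, fb i (ξ x) * iteratedDeriv i v (ξ x)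
      = φ x * ∑ i : Fin 5, f i x * iteratedDeriv i u x)
include hφ0 heq

lemma Idir_Prolong (z : J) : Idir fb (Prolong ξ φ z) = φ (z 0) * Idir f z := by
  obtain ⟨c, hc⟩ := exists_fibreLinear_comp_Prolong hξ hφ hξ' fb
  suffices hcoeff : ∀ x, (fun i => c i x) = fun i => φ x * f i x by
    rw [Idir_eq_fibreLinear, Idir_eq_fibreLinear, hc]
    simp only [fibreLinear, Finset.mul_sum, ← mul_assoc, ← congrFun (hcoeff (z 0))]
  intro x₀
  -- The jets at `x₀` of the test functions `(ξ - ξ x₀) ^ m / φ`, `m ≤ 4`, are triangular.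
  have hH : ContDiff ℝ ∞ fun x => (φ x)⁻¹ := hφ.inv hφ0
  refine eq_of_forall_sum_mul_iteratedDeriv_pow_mul_eq (hξ.sub contDiff_const) (sub_self (ξ x₀)) hH
    (by simpa using hξ' x₀) (inv_ne_zero (hφ0 x₀)) fun m => ?_
  have hv : ContDiff ℝ ∞ fun y => (y - ξ x₀) ^ (m : ℕ) := (contDiff_id.sub contDiff_const).pow _
  have hu : ContDiff ℝ ∞ fun x => (ξ x - ξ x₀) ^ (m : ℕ) * (φ x)⁻¹ :=
    ((hξ.sub contDiff_const).pow _).mul hH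
  have hvu (x : ℝ) : (ξ x - ξ x₀) ^ (m : ℕ) = φ x * ((ξ x - ξ x₀) ^ (m : ℕ) * (φ x)⁻¹) := by
    field_simp [hφ0 x]
  rw [← fibreLinear_jet, ← hc, Prolong_jet hξ hφ hξ' hu hv hvu, fibreLinear_jet,
    heq _ _ hu hv hvu, Finset.mul_sum]
  simp only [mul_assoc]

lemma Igau_Prolong {z : J} (hz : z 1 ≠ 0) : Igau fb (Prolong ξ φ z) = Igau f z := by
  have hP : Prolong ξ φ z 1 = φ (z 0) * z 1 := rfl
  rw [Igau_eq_Idir_div fb (hP ▸ mul_ne_zero (hφ0 _) hz), Igau_eq_Idir_div f hz,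
    Idir_Prolong hξ hφ hξ' hφ0 heq, hP, mul_div_mul_left _ _ (hφ0 _)]

lemma pullback_Prolong_fderiv_Igau (hfb : ∀ i, Differentiable ℝ (fb i)) {z : J} (hz : z 1 ≠ 0) :
    pullback (Prolong ξ φ) (fun w => fderiv ℝ (Igau fb) w) z = fderiv ℝ (Igau f) z := by
  rw [pullback_apply, ← fderiv_comp z (differentiableAt_Igau hfb (mul_ne_zero (hφ0 _) hz))
    (differentiable_Prolong hξ hφ hξ' z)]
  refine Filter.EventuallyEq.fderiv_eq ?_
  filter_upwards [((continuous_apply 1).isOpen_preimage _ isOpen_compl_singleton).mem_nhds hz]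
    with w hw
  exact Igau_Prolong hξ hφ hξ' hφ0 heq hw

end Gauge

theorem gauge_equivalence_coframes_general (ξ φ : ℝ → ℝ) (f fb : Fin 5 → ℝ → ℝ)
    (hξ : ContDiff ℝ (⊤ : ℕ∞) ξ) (hφ : ContDiff ℝ (⊤ : ℕ∞) φ)
    (hξ' : ∀ x, deriv ξ x ≠ 0) (hφ0 : ∀ x, φ x ≠ 0)
    (hfb : ∀ i, ContDiff ℝ (⊤ : ℕ∞) (fb i))
    -- gauge equivalence: `D̄[ū](ξ(x)) = φ(x)·D[u](x)` whenever `ū(ξ(x)) = φ(x)u(x)`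
    (heq : ∀ u v : ℝ → ℝ, ContDiff ℝ (⊤ : ℕ∞) u → ContDiff ℝ (⊤ : ℕ∞) v →
      (∀ x, v (ξ x) = φ x * u x) →
      ∀ x, ∑ i : Fin 5, fb i (ξ x) * iteratedDeriv i.1 v (ξ x)
         = φ x * ∑ i : Fin 5, f i x * iteratedDeriv i.1 u x) :
    ∃ a : Fin 10 → (J → ℝ),
      (∀ i, ContDiff ℝ (⊤ : ℕ∞) (a i)) ∧
      (∀ z : J, z 1 ≠ 0 →
        pullback (Prolong ξ φ) ω1 z = a 0 z • ω1 z ∧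
        pullback (Prolong ξ φ) ω2 z = ω2 z ∧
        pullback (Prolong ξ φ) ω3 z = a 1 z • ω2 z + a 2 z • ω3 z ∧
        pullback (Prolong ξ φ) ω4 z = a 3 z • ω2 z + a 4 z • ω3 z + a 5 z • ω4 z ∧
        pullback (Prolong ξ φ) ω5 z
          = a 6 z • ω2 z + a 7 z • ω3 z + a 8 z • ω4 z + a 9 z • ω5 z ∧
        pullback (Prolong ξ φ) (fun w => fderiv ℝ (Igau fb) w) z = fderiv ℝ (Igau f) z) ∧
      (∀ z : J, a 0 z * a 2 z * a 5 z * a 9 z ≠ 0) ∧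
      (∀ z : J, a 0 z = deriv ξ (z 0) ∧ a 2 z = φ (z 0) / deriv ξ (z 0) ∧
        a 5 z = φ (z 0) / (deriv ξ (z 0)) ^ 2 ∧ a 9 z = φ (z 0) / (deriv ξ (z 0)) ^ 3) := by
  let c := prolongCoeffs ξ φ
  have hc (n : ℕ) (i : Fin 5) : ContDiff ℝ ∞ fun z : J => c n i (z 0) :=
    (contDiff_prolongCoeffs hξ hφ hξ' n i).comp (contDiff_apply ℝ ℝ 0)
  have hu : ContDiff ℝ ∞ fun z : J => z 1 := contDiff_apply ℝ ℝ 1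
  have hdiag (z : J) : c 0 1 (z 0) = φ (z 0) / deriv ξ (z 0) ∧
      c 1 2 (z 0) = φ (z 0) / deriv ξ (z 0) ^ 2 ∧ c 2 3 (z 0) = φ (z 0) / deriv ξ (z 0) ^ 3 :=
    ⟨by simp [c, prolongCoeffs_diag 0 1 rfl], by simp [c, prolongCoeffs_diag 1 2 rfl],
      by simp [c, prolongCoeffs_diag 2 3 rfl]⟩
  refine ⟨![fun z => deriv ξ (z 0), fun z => z 1 * c 0 0 (z 0), fun z => c 0 1 (z 0),
      fun z => z 1 * c 1 0 (z 0), fun z => c 1 1 (z 0), fun z => c 1 2 (z 0),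
      fun z => z 1 * c 2 0 (z 0), fun z => c 2 1 (z 0), fun z => c 2 2 (z 0),
      fun z => c 2 3 (z 0)], ?_, fun z hz => ?_, fun z => ?_, fun z => ⟨rfl, hdiag z⟩⟩
  · intro i
    fin_cases i
    exacts [(contDiff_infty_iff_deriv.mp hξ).2.comp (contDiff_apply ℝ ℝ 0), hu.mul (hc 0 0), hc 0 1,
      hu.mul (hc 1 0), hc 1 1, hc 1 2, hu.mul (hc 2 0), hc 2 1, hc 2 2, hc 2 3]
  · exact ⟨pullback_Prolong_ω1 hξ hφ hξ' z, pullback_Prolong_ω2 hξ hφ hξ' hφ0 hz,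
      pullback_Prolong_ω3 hξ hφ hξ' hz, pullback_Prolong_ω4 hξ hφ hξ' hz,
      pullback_Prolong_ω5 hξ hφ hξ' hz,
      pullback_Prolong_fderiv_Igau hξ hφ hξ' hφ0 heq (fun i => (hfb i).differentiable (by simp)) hz⟩
  · obtain ⟨h1, h2, h3⟩ := hdiag z
    simp only [Matrix.cons_val, h1, h2, h3]
    have := hφ0 (z 0)
    have := hξ' (z 0)
    positivity

/-- Proposition 1, gauge equivalence: if `D̄ = φ ∘ D ∘ (1/φ)` under
`x̄ = ξ(x), ū = φ(x)u`, then the prolongation `Φ` relates the two coframes by the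
triangular structure group, and `Φ*ω̄⁶ = ω⁶` for `I = (f₄s + f₃r + f₂q + f₁p)/u + f₀`. -/
theorem gauge_equivalence_coframes (ξ φ : ℝ → ℝ) (f fb : Fin 5 → ℝ → ℝ)
    (hξ : ContDiff ℝ (⊤ : ℕ∞) ξ) (hφ : ContDiff ℝ (⊤ : ℕ∞) φ)
    (hξ' : ∀ x, deriv ξ x ≠ 0) (hφ0 : ∀ x, φ x ≠ 0)
    (hf : ∀ i, ContDiff ℝ (⊤ : ℕ∞) (f i)) (hfb : ∀ i, ContDiff ℝ (⊤ : ℕ∞) (fb i))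
    -- gauge equivalence: `D̄[ū](ξ(x)) = φ(x)·D[u](x)` whenever `ū(ξ(x)) = φ(x)u(x)`
    (heq : ∀ u v : ℝ → ℝ, ContDiff ℝ (⊤ : ℕ∞) u → ContDiff ℝ (⊤ : ℕ∞) v →
      (∀ x, v (ξ x) = φ x * u x) →
      ∀ x, ∑ i : Fin 5, fb i (ξ x) * iteratedDeriv i.1 v (ξ x)
         = φ x * ∑ i : Fin 5, f i x * iteratedDeriv i.1 u x) :
    ∃ a : Fin 10 → (J → ℝ),
      (∀ i, ContDiff ℝ (⊤ : ℕ∞) (a i)) ∧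
      (∀ z : J, z 1 ≠ 0 →
        pullback (Prolong ξ φ) ω1 z = a 0 z • ω1 z ∧
        pullback (Prolong ξ φ) ω2 z = ω2 z ∧
        pullback (Prolong ξ φ) ω3 z = a 1 z • ω2 z + a 2 z • ω3 z ∧
        pullback (Prolong ξ φ) ω4 z = a 3 z • ω2 z + a 4 z • ω3 z + a 5 z • ω4 z ∧
        pullback (Prolong ξ φ) ω5 z
          = a 6 z • ω2 z + a 7 z • ω3 z + a 8 z • ω4 z + a 9 z • ω5 z ∧
        pullback (Prolong ξ φ) (fun w => fderiv ℝ (Igau fb) w) z = fderiv ℝ (Igau f) z) ∧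
      (∀ z : J, a 0 z * a 2 z * a 5 z * a 9 z ≠ 0) ∧
      (∀ z : J, a 0 z = deriv ξ (z 0) ∧ a 2 z = φ (z 0) / deriv ξ (z 0) ∧
        a 5 z = φ (z 0) / (deriv ξ (z 0)) ^ 2 ∧ a 9 z = φ (z 0) / (deriv ξ (z 0)) ^ 3) :=
  gauge_equivalence_coframes_general ξ φ f fb hξ hφ hξ' hφ0 hfb heq
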